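/- Let A be a commutative ring and F, G two formal group laws over A whose truncations modulo degree m agree, i.e. F ≡ G mod (T₁,T₂)^m for some m ≥ 2. Then the difference of their degree-m truncations, F − G taken modulo (T₁,T₂)^{m+1}, is a homogeneous symmetric polynomial 2-cocycle of degree m: writing P(T₁,T₂) for the degree-m homogeneous part of F − G, P is symmetric and satisfies P(T₂,T₃) − P(T₁+T₂,T₃) + P(T₁,T₂+T₃) − P(T₁,T₂) = 0. -/

import Mathlib

noncomputable section

variable {A : Type*} [CommRing A]

/-- Substitution of a family of (multivariate) power series into a multivariate power
series, defined coefficientwise via truncation.  It computes the honest substitution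
whenever each `a s` has zero constant coefficient. -/
def psubst {σ τ : Type*} [Fintype σ] [DecidableEq σ] (F : MvPowerSeries σ A)
    (a : σ → MvPowerSeries τ A) : MvPowerSeries τ A :=
  fun e => MvPowerSeries.coeff e
    (MvPolynomial.eval₂ (MvPowerSeries.C : A →+* MvPowerSeries τ A) a
      (MvPowerSeries.trunc A
        (Finsupp.equivFunOnFinite.symm fun _ => (e.sum fun _ k => k) + 1) F))

/-- `subst2 F f g` is `F(f, g)`. -/
def subst2 {τ : Type*} (F : MvPowerSeries (Fin 2) A) (f g : MvPowerSeries τ A) :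
    MvPowerSeries τ A :=
  psubst F ![f, g]

/-- `subst1 f G` is `f(G)`, substitution of a multivariate power series into a
one-variable power series. -/
def subst1 {τ : Type*} (f : PowerSeries A) (G : MvPowerSeries τ A) : MvPowerSeries τ A :=
  psubst f (fun _ => G)

/-- A (commutative, one-dimensional) formal group law over `A`. -/
structure IsFormalGroupLaw (F : MvPowerSeries (Fin 2) A) : Prop where
  id_left : subst2 F PowerSeries.X 0 = (PowerSeries.X : PowerSeries A)
  id_right : subst2 F 0 PowerSeries.X = (PowerSeries.X : PowerSeries A)
  assoc : subst2 F (subst2 F (MvPowerSeries.X 0) (MvPowerSeries.X 1))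
        (MvPowerSeries.X (2 : Fin 3))
      = subst2 F (MvPowerSeries.X 0) (subst2 F (MvPowerSeries.X 1) (MvPowerSeries.X 2))
  comm : subst2 F (MvPowerSeries.X 1) (MvPowerSeries.X (0 : Fin 2)) = F

/-- The `m`-series `[m]_F` of a formal group law: `[1]_F = T`, `[m+1]_F = F([m]_F, T)`. -/
def mulSeries (F : MvPowerSeries (Fin 2) A) : ℕ → PowerSeries A
  | 0 => 0
  | 1 => PowerSeries.X
  | (n+2) => subst2 F (mulSeries F (n+1)) PowerSeries.X

/-- The defect `∂f = f ∘ F − G ∘ (f × f)` measuring the failure of `f` to be a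
homomorphism of formal group laws `F → G`. -/
def fglDelta (F G : MvPowerSeries (Fin 2) A) (f : PowerSeries A) :
    MvPowerSeries (Fin 2) A :=
  subst1 f F - subst2 G (subst1 f (MvPowerSeries.X 0)) (subst1 f (MvPowerSeries.X 1))

/-- `f` is a homomorphism of formal group laws `F → G`. -/
def IsFGLHom (F G : MvPowerSeries (Fin 2) A) (f : PowerSeries A) : Prop :=
  PowerSeries.constantCoeff f = 0 ∧ fglDelta F G f = 0

/-- Lazard's polynomial `B_m = (T₁+T₂)^m − T₁^m − T₂^m`. -/
def Bpoly (A : Type*) [CommRing A] (m : ℕ) : MvPolynomial (Fin 2) A :=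
  (MvPolynomial.X 0 + MvPolynomial.X 1) ^ m - MvPolynomial.X 0 ^ m - MvPolynomial.X 1 ^ m

/-- `λ(m)`: the prime `ℓ` if `m` is a power of `ℓ`, and `1` otherwise. -/
def lambdaFun (m : ℕ) : ℕ := if IsPrimePow m then m.minFac else 1

/-- Lazard's polynomial `C_m = B_m / λ(m)`. -/
def Cpoly (A : Type*) [CommRing A] (m : ℕ) : MvPolynomial (Fin 2) A :=
  ∑ i ∈ Finset.Ioo 0 m, MvPolynomial.monomial
    (Finsupp.single 0 i + Finsupp.single 1 (m - i)) ((m.choose i / lambdaFun m : ℕ) : A)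

/-- The degree-`m` homogeneous part of a two-variable power series, as a polynomial. -/
def degPart (m : ℕ) (Φ : MvPowerSeries (Fin 2) A) : MvPolynomial (Fin 2) A :=
  ∑ i ∈ Finset.range (m + 1), MvPolynomial.monomial
    (Finsupp.single 0 i + Finsupp.single 1 (m - i))
    (MvPowerSeries.coeff (Finsupp.single 0 i + Finsupp.single 1 (m - i)) Φ)

/-- The symmetric 2-cocycle condition for a two-variable polynomial. -/
def IsSymmCocycle (P : MvPolynomial (Fin 2) A) : Prop :=
  MvPolynomial.rename (Equiv.swap (0 : Fin 2) 1) P = P ∧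
  MvPolynomial.aeval ![(MvPolynomial.X 1 : MvPolynomial (Fin 3) A), MvPolynomial.X 2] P
    - MvPolynomial.aeval ![(MvPolynomial.X 0 + MvPolynomial.X 1 : MvPolynomial (Fin 3) A),
        MvPolynomial.X 2] P
    + MvPolynomial.aeval ![(MvPolynomial.X 0 : MvPolynomial (Fin 3) A),
        MvPolynomial.X 1 + MvPolynomial.X 2] P
    - MvPolynomial.aeval ![(MvPolynomial.X 0 : MvPolynomial (Fin 3) A), MvPolynomial.X 1] P = 0

end

/-!
Write `Δ = F - G`, a series of order `≥ m`, and `P` for its degree-`m` part. Modulo terms of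
degree `> m`, substituting into `Δ` only sees the linear parts of the arguments, while
substituting into `G` is additive in perturbations of order `≥ m`, because
`G(T₁, T₂) ≡ T₁ + T₂` modulo degree `2`. Expanded this way, `F(F(x,y),z) - G(G(x,y),z)` becomes
`Δ(x+y,z) + Δ(x,y)` and `F(x,F(y,z)) - G(x,G(y,z))` becomes `Δ(x,y+z) + Δ(y,z)`, and
associativity of `F` and `G` equates the two. As `P ≡ Δ` modulo degree `m + 1`, the cocycle
expression in `P` is then a homogeneous polynomial of degree `m` of order `> m`, hence zero.
Symmetry of `P` follows in the same way from commutativity.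
-/

namespace MvPowerSeries

variable {σ τ R : Type*} [CommRing R] {f g : MvPowerSeries σ R} {n : ℕ∞}

theorem le_order_add_of_le (hf : n ≤ f.order) (hg : n ≤ g.order) : n ≤ (f + g).order :=
  (le_min hf hg).trans min_order_le_add

theorem le_order_sub_of_le (hf : n ≤ f.order) (hg : n ≤ g.order) : n ≤ (f - g).order := by
  rw [sub_eq_add_neg]
  exact le_order_add_of_le hf (by rwa [order_neg])

theorem le_order_prod_sub_prod {ι : Type*} (t : Finset ι) (a b : ι → MvPowerSeries σ R)
    (w : ι → ℕ∞) (j : ℕ∞) (ha : ∀ i ∈ t, w i ≤ (a i).order) (hb : ∀ i ∈ t, w i ≤ (b i).order)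
    (hab : ∀ i ∈ t, w i + j ≤ (a i - b i).order) :
    (∑ i ∈ t, w i) + j ≤ (∏ i ∈ t, a i - ∏ i ∈ t, b i).order := by
  classical
  induction t using Finset.induction with
  | empty => simp
  | insert i t hi ih =>
    simp only [Finset.mem_insert, forall_eq_or_imp] at ha hb hab
    rw [Finset.prod_insert hi, Finset.prod_insert hi, Finset.sum_insert hi,
      show a i * ∏ k ∈ t, a k - b i * ∏ k ∈ t, b k
        = a i * (∏ k ∈ t, a k - ∏ k ∈ t, b k) + (a i - b i) * ∏ k ∈ t, b k by ring]
    have hprod : ∑ k ∈ t, w k ≤ (∏ k ∈ t, b k).order :=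
      (Finset.sum_le_sum hb.2).trans (le_order_prod b t)
    refine le_order_add_of_le ?_ ?_
    · exact (add_assoc (w i) _ j ▸ add_le_add ha.1 (ih ha.2 hb.2 hab.2)).trans le_order_mul
    · calc w i + ∑ k ∈ t, w k + j = (w i + j) + ∑ k ∈ t, w k := by abel
        _ ≤ _ := (add_le_add hab.1 hprod).trans le_order_mul

theorem le_order_pow_sub_pow (hf : 1 ≤ f.order) (hg : 1 ≤ g.order) {j : ℕ∞}
    (hfg : 1 + j ≤ (f - g).order) (k : ℕ) : k + j ≤ (f ^ k - g ^ k).order := by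
  simpa [Finset.prod_const] using
    le_order_prod_sub_prod (Finset.range k) (fun _ => f) (fun _ => g) (fun _ => 1) j
      (fun _ _ => hf) (fun _ _ => hg) (fun _ _ => hfg)

variable [Fintype σ] {a b : σ → MvPowerSeries τ R}

theorem le_order_prod_pow (ha : ∀ s, constantCoeff (a s) = 0) (d : σ →₀ ℕ) :
    d.degree ≤ (∏ s, a s ^ d s).order := by
  rw [Finsupp.degree_eq_sum, Nat.cast_sum]
  exact (Finset.sum_le_sum fun s _ => le_order_pow_of_constantCoeff_eq_zero _ (ha s)).trans
    (le_order_prod _ _)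

theorem coeff_prod_pow_of_degree_lt (ha : ∀ s, constantCoeff (a s) = 0) {d : σ →₀ ℕ}
    {e : τ →₀ ℕ} (h : e.degree < d.degree) : coeff e (∏ s, a s ^ d s) = 0 :=
  coeff_of_lt_order ((Nat.cast_lt.2 h).trans_le (le_order_prod_pow ha d))

theorem le_order_prod_pow_sub_prod_pow (ha : ∀ s, constantCoeff (a s) = 0)
    (hb : ∀ s, constantCoeff (b s) = 0) {j : ℕ∞} (hab : ∀ s, 1 + j ≤ (a s - b s).order)
    (d : σ →₀ ℕ) : d.degree + j ≤ (∏ s, a s ^ d s - ∏ s, b s ^ d s).order := by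
  rw [Finsupp.degree_eq_sum, Nat.cast_sum]
  exact le_order_prod_sub_prod _ _ _ _ _
    (fun s _ => le_order_pow_of_constantCoeff_eq_zero _ (ha s))
    (fun s _ => le_order_pow_of_constantCoeff_eq_zero _ (hb s))
    (fun s _ => le_order_pow_sub_pow (one_le_order_iff_constCoeff_eq_zero.2 (ha s))
      (one_le_order_iff_constCoeff_eq_zero.2 (hb s)) (hab s) _)

end MvPowerSeries

namespace MvPolynomial

variable {A σ τ : Type*} [CommRing A]

theorem coe_sub (p q : MvPolynomial σ A) :
    ((p - q : MvPolynomial σ A) : MvPowerSeries σ A) = p - q :=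
  map_sub coeToMvPowerSeries.ringHom p q

theorem constantCoeff_coe (p : MvPolynomial σ A) :
    MvPowerSeries.constantCoeff (p : MvPowerSeries σ A) = constantCoeff p := by
  rw [← MvPowerSeries.coeff_zero_eq_constantCoeff_apply, coeff_coe, constantCoeff_eq]

theorem coe_aeval (f : σ → MvPolynomial τ A) (p : MvPolynomial σ A) :
    ((aeval f p : MvPolynomial τ A) : MvPowerSeries τ A) =
      aeval (fun s => (f s : MvPowerSeries τ A)) p := by
  rw [← coeToMvPowerSeries.ringHom_apply, aeval_def, eval₂_comp_left, aeval_def]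
  congr 1
  ext r
  simp [MvPowerSeries.c_eq_algebraMap]

theorem IsHomogeneous.eq_zero_of_le_order {p : MvPolynomial σ A} {m : ℕ}
    (hp : p.IsHomogeneous m) (h : ↑(m + 1) ≤ (p : MvPowerSeries σ A).order) : p = 0 := by
  ext d
  rw [coeff_zero]
  by_cases hd : d.degree = m
  · rw [← coeff_coe]
    exact MvPowerSeries.coeff_of_lt_order ((Nat.cast_lt.2 (hd ▸ m.lt_succ_self)).trans_le h)
  · exact hp.coeff_eq_zero hd

end MvPolynomial

theorem Finsupp.degree_fin_two (d : Fin 2 →₀ ℕ) : d.degree = d 0 + d 1 := by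
  rw [Finsupp.degree_eq_sum, Fin.sum_univ_two]

theorem prod_piSingle_pow {ι R : Type*} [Fintype ι] [DecidableEq ι] [CommMonoidWithZero R]
    (k : ι) (x : R) (d : ι →₀ ℕ) :
    ∏ i, Pi.single k x i ^ d i = if d = Finsupp.single k (d k) then x ^ d k else 0 := by
  split_ifs with h
  · rw [Fintype.prod_eq_single k fun i hi => by
      rw [h, Finsupp.single_eq_of_ne hi, pow_zero], Pi.single_eq_same]
  · obtain ⟨i, hi⟩ : ∃ i, d i ≠ Finsupp.single k (d k) i := by
      by_contra! h'
      exact h (Finsupp.ext h')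
    have hik : i ≠ k := by rintro rfl; simp at hi
    rw [Finsupp.single_eq_of_ne hik] at hi
    exact Finset.prod_eq_zero (Finset.mem_univ i) (by rw [Pi.single_eq_of_ne hik, zero_pow hi])

section psubst

open MvPowerSeries

variable {A σ τ : Type*} [CommRing A] [Fintype σ] [DecidableEq σ]

theorem coeff_psubst (F : MvPowerSeries σ A) (a : σ → MvPowerSeries τ A) (e : τ →₀ ℕ) :
    coeff e (psubst F a) =
      ∑ d ∈ Finset.Iio (Finsupp.equivFunOnFinite.symm fun _ => e.degree + 1),
        coeff d F * coeff e (∏ s, a s ^ d s) := by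
  have htrunc : trunc A (Finsupp.equivFunOnFinite.symm fun _ => (e.sum fun _ k => k) + 1) F
      = truncFinset A (Finset.Iio (Finsupp.equivFunOnFinite.symm fun _ => e.degree + 1)) F :=
    rfl
  rw [coeff_apply, psubst, htrunc, truncFinset_apply, MvPolynomial.eval₂_sum, map_sum]
  refine Finset.sum_congr rfl fun d _ => ?_
  rw [MvPolynomial.eval₂_monomial, coeff_C_mul, Finsupp.prod_fintype _ _ fun _ => pow_zero _]

theorem psubst_sub (F G : MvPowerSeries σ A) (a : σ → MvPowerSeries τ A) :
    psubst (F - G) a = psubst F a - psubst G a := by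
  ext e
  simp only [map_sub, coeff_psubst, ← Finset.sum_sub_distrib, sub_mul]

variable {a b c : σ → MvPowerSeries τ A}

theorem le_order_psubst {Φ : MvPowerSeries σ A} {n : ℕ∞} (hΦ : n ≤ Φ.order)
    (ha : ∀ s, constantCoeff (a s) = 0) : n ≤ (psubst Φ a).order := by
  refine le_order fun e he => ?_
  rw [coeff_psubst]
  refine Finset.sum_eq_zero fun d _ => ?_
  rcases lt_or_ge (d.degree : ℕ∞) n with hd | hd
  · rw [coeff_of_lt_order (hd.trans_le hΦ), zero_mul]
  · rw [coeff_prod_pow_of_degree_lt ha (Nat.cast_lt.1 (he.trans_le hd)), mul_zero]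

theorem le_order_psubst_sub_psubst {Φ : MvPowerSeries σ A} {k j : ℕ∞} (hΦ : k ≤ Φ.order)
    (ha : ∀ s, constantCoeff (a s) = 0) (hb : ∀ s, constantCoeff (b s) = 0)
    (hab : ∀ s, 1 + j ≤ (a s - b s).order) : k + j ≤ (psubst Φ a - psubst Φ b).order := by
  refine le_order fun e he => ?_
  rw [map_sub, coeff_psubst, coeff_psubst, ← Finset.sum_sub_distrib]
  refine Finset.sum_eq_zero fun d _ => ?_
  rw [← mul_sub, ← map_sub]
  rcases lt_or_ge (d.degree : ℕ∞) k with hd | hd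
  · rw [coeff_of_lt_order (hd.trans_le hΦ), zero_mul]
  · rw [coeff_of_lt_order ((he.trans_le (add_le_add hd le_rfl)).trans_le
      (le_order_prod_pow_sub_prod_pow ha hb hab d)), mul_zero]

-- For empty `σ` the truncation box used by `psubst` is empty, so `psubst F a = 0`.
theorem mem_Iio_of_degree_le [Nonempty σ] {d : σ →₀ ℕ} {n : ℕ} (h : d.degree ≤ n) :
    d ∈ Finset.Iio (Finsupp.equivFunOnFinite.symm fun _ => n + 1 : σ →₀ ℕ) := by
  have hle : ∀ s, d s ≤ n := fun s => (Finsupp.le_degree s d).trans h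
  refine Finset.mem_Iio.2 (lt_of_le_of_ne (fun s => by simpa using (hle s).trans n.le_succ)
    fun hd => ?_)
  obtain ⟨s⟩ := ‹Nonempty σ›
  simpa [hd] using hle s

theorem coeff_psubst_eq_sum [Nonempty σ] {F : MvPowerSeries σ A}
    (ha : ∀ s, constantCoeff (a s) = 0) {e : τ →₀ ℕ} (t : Finset (σ →₀ ℕ))
    (ht : ∀ d, d.degree ≤ e.degree → coeff d F * coeff e (∏ s, a s ^ d s) ≠ 0 → d ∈ t) :
    coeff e (psubst F a) = ∑ d ∈ t, coeff d F * coeff e (∏ s, a s ^ d s) := by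
  have hhigh : ∀ d : σ →₀ ℕ, ¬ d.degree ≤ e.degree →
      coeff d F * coeff e (∏ s, a s ^ d s) = 0 := fun d hd => by
    rw [coeff_prod_pow_of_degree_lt ha (not_le.1 hd), mul_zero]
  rw [coeff_psubst, ← Finset.sum_subset Finset.inter_subset_right,
    ← Finset.sum_subset (Finset.inter_subset_left (s₁ := t))]
  · exact fun d hdt hd => hhigh d fun hle =>
      hd (Finset.mem_inter.2 ⟨hdt, mem_Iio_of_degree_le hle⟩)
  · intro d hdI hd
    by_contra hne
    by_cases hle : d.degree ≤ e.degree
    · exact hd (Finset.mem_inter.2 ⟨ht d hle hne, hdI⟩)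
    · exact hne (hhigh d hle)

theorem psubst_coe [Nonempty σ] (p : MvPolynomial σ A) (ha : ∀ s, constantCoeff (a s) = 0) :
    psubst (p : MvPowerSeries σ A) a = MvPolynomial.aeval a p := by
  ext e
  rw [coeff_psubst_eq_sum ha p.support fun d _ h => by
      simpa [MvPolynomial.coeff_coe] using left_ne_zero_of_mul h,
    MvPolynomial.aeval_def, MvPolynomial.eval₂_eq', map_sum]
  refine Finset.sum_congr rfl fun d _ => ?_
  rw [MvPolynomial.coeff_coe, ← c_eq_algebraMap, coeff_C_mul]

theorem psubst_sum_X [Nonempty σ] (ha : ∀ s, constantCoeff (a s) = 0) :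
    psubst (∑ s, X s) a = ∑ s, a s := by
  have hcoe : ((∑ s, MvPolynomial.X s : MvPolynomial σ A) : MvPowerSeries σ A) = ∑ s, X s := by
    rw [← MvPolynomial.coeToMvPowerSeries.ringHom_apply, map_sum]
    simp only [MvPolynomial.coeToMvPowerSeries.ringHom_apply, MvPolynomial.coe_X]
  rw [← hcoe, psubst_coe _ ha, map_sum]
  simp only [MvPolynomial.aeval_X]

theorem coeff_psubst_piSingle [DecidableEq τ] (F : MvPowerSeries σ A) (k : σ) (t : τ) (i : ℕ) :
    coeff (Finsupp.single t i) (psubst F (Pi.single k (X t))) = coeff (Finsupp.single k i) F := by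
  have : Nonempty σ := ⟨k⟩
  have ha : ∀ s, constantCoeff ((Pi.single k (X t) : σ → MvPowerSeries τ A) s) = 0 := by
    intro s
    by_cases hs : s = k
    · subst hs; simp
    · simp [Pi.single_eq_of_ne hs]
  rw [coeff_psubst_eq_sum ha {Finsupp.single k i} fun d _ hd => ?_]
  · simp [prod_piSingle_pow, coeff_X_pow]
  · rw [prod_piSingle_pow] at hd
    split_ifs at hd with h
    · rw [coeff_X_pow] at hd
      split_ifs at hd with h'
      · rw [Finset.mem_singleton, h, ← Finsupp.single_injective t h']
      · simp at hd
    · simp at hd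

theorem le_order_psubst_sub_psubst_sub_sum [Nonempty σ] {H : MvPowerSeries σ A}
    (hH : 2 ≤ (H - ∑ s, X s).order) {m : ℕ} (hm : 1 ≤ m) (ha : ∀ s, constantCoeff (a s) = 0)
    (hb : ∀ s, constantCoeff (b s) = 0) (hab : ∀ s, m ≤ (a s - b s).order) :
    ↑(m + 1) ≤ (psubst H a - psubst H b - ∑ s, (a s - b s)).order := by
  have hsplit : psubst H a - psubst H b - ∑ s, (a s - b s)
      = psubst (H - ∑ s, X s) a - psubst (H - ∑ s, X s) b := by
    rw [psubst_sub, psubst_sub, psubst_sum_X ha, psubst_sum_X hb, Finset.sum_sub_distrib]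
    ring
  have hm' : ((m + 1 : ℕ) : ℕ∞) = 2 + ↑(m - 1) := by norm_cast; omega
  rw [hsplit, hm']
  refine le_order_psubst_sub_psubst hH ha hb fun s => ?_
  convert hab s
  norm_cast
  omega

theorem le_order_psubst_sub_psubst_sub_of_congr [Nonempty σ] {F G : MvPowerSeries σ A}
    (hG : 2 ≤ (G - ∑ s, X s).order) {m : ℕ} (hm : 1 ≤ m) (hFG : m ≤ (F - G).order)
    (ha : ∀ s, constantCoeff (a s) = 0) (hb : ∀ s, constantCoeff (b s) = 0)
    (hc : ∀ s, constantCoeff (c s) = 0) (hac : ∀ s, 2 ≤ (a s - c s).order)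
    (hab : ∀ s, m ≤ (a s - b s).order) :
    ↑(m + 1) ≤ (psubst F a - psubst G b - (psubst (F - G) c + ∑ s, (a s - b s))).order := by
  have hsplit : psubst F a - psubst G b - (psubst (F - G) c + ∑ s, (a s - b s))
      = (psubst (F - G) a - psubst (F - G) c)
        + (psubst G a - psubst G b - ∑ s, (a s - b s)) := by
    rw [psubst_sub, psubst_sub]
    ring
  rw [hsplit]
  refine le_order_add_of_le ?_ (le_order_psubst_sub_psubst_sub_sum hG hm ha hb hab)
  have h := le_order_psubst_sub_psubst (j := 1) hFG ha hc (by simpa [one_add_one_eq_two] using hac)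
  exact_mod_cast h

end psubst

section IsFormalGroupLaw

open MvPowerSeries

variable {A τ : Type*} [CommRing A] {F G : MvPowerSeries (Fin 2) A} {a b : MvPowerSeries τ A}

theorem IsFormalGroupLaw.coeff_single (hF : IsFormalGroupLaw F) (k : Fin 2) (i : ℕ) :
    coeff (Finsupp.single k i) F = if i = 1 then 1 else 0 := by
  have hunit : psubst F (Pi.single k (X ())) = PowerSeries.X := by
    fin_cases k
    · convert hF.id_left using 1
      exact congrArg (psubst F) (funext fun s => by fin_cases s <;> simp [PowerSeries.X])
    · convert hF.id_right using 1
      exact congrArg (psubst F) (funext fun s => by fin_cases s <;> simp [PowerSeries.X])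
  rw [← coeff_psubst_piSingle F k () i, hunit, PowerSeries.X, coeff_X]
  simp

theorem IsFormalGroupLaw.le_order_sub_sum_X (hF : IsFormalGroupLaw F) :
    2 ≤ (F - ∑ s, X s).order := by
  refine nat_le_order fun d hd => ?_
  replace hd : d 0 + d 1 < 2 := by simpa [Finsupp.degree_fin_two] using hd
  obtain ⟨k, hk⟩ : ∃ k, d = Finsupp.single k (d k) := by
    by_cases h1 : d 1 = 0
    · exact ⟨0, Finsupp.ext fun s => by fin_cases s <;> simp [h1]⟩
    · have h0 : d 0 = 0 := by omega
      exact ⟨1, Finsupp.ext fun s => by fin_cases s <;> simp [h0]⟩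
  rw [hk, map_sub, map_sum, Fin.sum_univ_two, hF.coeff_single, coeff_X, coeff_X]
  have : d k ≤ 1 := (Finsupp.le_degree k d).trans (by rw [Finsupp.degree_fin_two]; omega)
  interval_cases (d k) <;> fin_cases k <;> simp [eq_comm, Finsupp.single_eq_single_iff]

theorem IsFormalGroupLaw.constantCoeff_subst2 (hF : IsFormalGroupLaw F)
    (ha : constantCoeff a = 0) (hb : constantCoeff b = 0) : constantCoeff (subst2 F a b) = 0 := by
  have hF0 : constantCoeff F = 0 := by simpa using hF.coeff_single 0 0
  exact one_le_order_iff_constCoeff_eq_zero.1 (le_order_psubst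
    (one_le_order_iff_constCoeff_eq_zero.2 hF0) (Fin.forall_fin_two.2 ⟨ha, hb⟩))

theorem IsFormalGroupLaw.le_order_subst2_sub_add (hF : IsFormalGroupLaw F)
    (ha : constantCoeff a = 0) (hb : constantCoeff b = 0) :
    2 ≤ (subst2 F a b - (a + b)).order := by
  have hab : ∀ s, constantCoeff (![a, b] s) = 0 := Fin.forall_fin_two.2 ⟨ha, hb⟩
  have h := le_order_psubst hF.le_order_sub_sum_X hab
  rwa [psubst_sub, psubst_sum_X hab, Fin.sum_univ_two] at h

theorem IsFormalGroupLaw.le_order_cocycle (hF : IsFormalGroupLaw F) (hG : IsFormalGroupLaw G)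
    {m : ℕ} (hm : 1 ≤ m) (hFG : m ≤ (F - G).order) :
    ↑(m + 1) ≤ (subst2 (F - G) (X 1) (X 2) - subst2 (F - G) (X 0 + X 1) (X 2)
      + subst2 (F - G) (X 0) (X 1 + X 2) - subst2 (F - G) (X 0) (X 1)
        : MvPowerSeries (Fin 3) A).order := by
  have hassoc := congrArg₂ (· - ·) hF.assoc hG.assoc
  set x : MvPowerSeries (Fin 3) A := X 0
  set y : MvPowerSeries (Fin 3) A := X 1
  set z : MvPowerSeries (Fin 3) A := X 2
  have hx : constantCoeff x = 0 := constantCoeff_X _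
  have hy : constantCoeff y = 0 := constantCoeff_X _
  have hz : constantCoeff z = 0 := constantCoeff_X _
  have hFG' : ∀ {a b : MvPowerSeries (Fin 3) A}, constantCoeff a = 0 → constantCoeff b = 0 →
      m ≤ (subst2 F a b - subst2 G a b).order :=
    fun ha hb => psubst_sub F G _ ▸ le_order_psubst hFG (Fin.forall_fin_two.2 ⟨ha, hb⟩)
  have hleft := le_order_psubst_sub_psubst_sub_of_congr hG.le_order_sub_sum_X hm hFG
    (a := ![subst2 F x y, z]) (b := ![subst2 G x y, z]) (c := ![x + y, z])
    (Fin.forall_fin_two.2 ⟨hF.constantCoeff_subst2 hx hy, hz⟩)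
    (Fin.forall_fin_two.2 ⟨hG.constantCoeff_subst2 hx hy, hz⟩)
    (Fin.forall_fin_two.2 ⟨by simp [hx, hy], hz⟩)
    (Fin.forall_fin_two.2 ⟨hF.le_order_subst2_sub_add hx hy, by simp⟩)
    (Fin.forall_fin_two.2 ⟨hFG' hx hy, by simp⟩)
  have hright := le_order_psubst_sub_psubst_sub_of_congr hG.le_order_sub_sum_X hm hFG
    (a := ![x, subst2 F y z]) (b := ![x, subst2 G y z]) (c := ![x, y + z])
    (Fin.forall_fin_two.2 ⟨hx, hF.constantCoeff_subst2 hy hz⟩)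
    (Fin.forall_fin_two.2 ⟨hx, hG.constantCoeff_subst2 hy hz⟩)
    (Fin.forall_fin_two.2 ⟨hx, by simp [hy, hz]⟩)
    (Fin.forall_fin_two.2 ⟨by simp, hF.le_order_subst2_sub_add hy hz⟩)
    (Fin.forall_fin_two.2 ⟨by simp, hFG' hy hz⟩)
  convert le_order_sub_of_le hleft hright using 2
  simp only [Fin.sum_univ_two, Matrix.cons_val_zero, Matrix.cons_val_one, sub_self, add_zero,
    zero_add]
  simp only [subst2, psubst_sub] at hassoc ⊢
  linear_combination -hassoc

end IsFormalGroupLaw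

section degPart

variable {A : Type*} [CommRing A] {m : ℕ} {Φ : MvPowerSeries (Fin 2) A}

theorem coeff_degPart (m : ℕ) (Φ : MvPowerSeries (Fin 2) A) (d : Fin 2 →₀ ℕ) :
    MvPolynomial.coeff d (degPart m Φ) =
      if d.degree = m then MvPowerSeries.coeff d Φ else 0 := by
  have key : ∀ i ∈ Finset.range (m + 1),
      (Finsupp.single 0 i + Finsupp.single 1 (m - i) = d ↔ i = d 0 ∧ d.degree = m) := by
    intro i hi
    rw [Finset.mem_range] at hi
    rw [Finsupp.degree_fin_two, Finsupp.ext_iff, Fin.forall_fin_two]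
    simp only [Finsupp.add_apply, Finsupp.single_eq_same, Finsupp.single_apply, zero_ne_one,
      one_ne_zero, if_false, add_zero, zero_add]
    omega
  have hterm : ∀ i ∈ Finset.range (m + 1),
      MvPolynomial.coeff d (MvPolynomial.monomial (Finsupp.single 0 i + Finsupp.single 1 (m - i))
        (MvPowerSeries.coeff (Finsupp.single 0 i + Finsupp.single 1 (m - i)) Φ)) =
      if d 0 = i then (if d.degree = m then MvPowerSeries.coeff d Φ else 0) else 0 := by
    intro i hi
    rw [MvPolynomial.coeff_monomial]
    by_cases h : Finsupp.single 0 i + Finsupp.single 1 (m - i) = d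
    · obtain ⟨rfl, hdeg⟩ := (key i hi).1 h
      rw [if_pos h, h, if_pos rfl, if_pos hdeg]
    · rw [if_neg h, eq_comm, ite_eq_right_iff]
      rintro rfl
      rw [ite_eq_right_iff]
      exact fun hdeg => absurd ((key _ hi).2 ⟨rfl, hdeg⟩) h
  rw [degPart, MvPolynomial.coeff_sum, Finset.sum_congr rfl hterm, Finset.sum_ite_eq,
    ite_eq_left_iff, Finset.mem_range, eq_comm, ite_eq_right_iff]
  intro hd hdeg
  exact absurd ((Finsupp.le_degree 0 d).trans_eq hdeg) (by omega)

theorem isHomogeneous_degPart (m : ℕ) (Φ : MvPowerSeries (Fin 2) A) :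
    (degPart m Φ).IsHomogeneous m := fun d hd => by
  rw [coeff_degPart] at hd
  refine (DFunLike.congr_fun Finsupp.degree_eq_weight_one d).symm.trans ?_
  by_contra h
  exact hd (if_neg h)

theorem le_order_sub_degPart (hΦ : m ≤ Φ.order) : ↑(m + 1) ≤ (Φ - degPart m Φ).order := by
  refine MvPowerSeries.nat_le_order fun d hd => ?_
  rw [map_sub, MvPolynomial.coeff_coe, coeff_degPart]
  split_ifs with h
  · exact sub_self _
  · rw [MvPowerSeries.coeff_of_lt_order ((Nat.cast_lt.2 (by omega)).trans_le hΦ), sub_zero]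

theorem le_order_subst2_sub_aeval_degPart {τ : Type*} (hΦ : m ≤ Φ.order)
    {p q : MvPolynomial τ A} (hp : MvPolynomial.constantCoeff p = 0)
    (hq : MvPolynomial.constantCoeff q = 0) :
    ↑(m + 1) ≤ (subst2 Φ (p : MvPowerSeries τ A) q
      - MvPolynomial.aeval ![p, q] (degPart m Φ)).order := by
  have hpq : ∀ s, MvPowerSeries.constantCoeff (![(p : MvPowerSeries τ A), q] s) = 0 :=
    Fin.forall_fin_two.2 ⟨(MvPolynomial.constantCoeff_coe p).trans hp,
      (MvPolynomial.constantCoeff_coe q).trans hq⟩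
  have hcoe : (fun s => ((![p, q] s : MvPolynomial τ A) : MvPowerSeries τ A)) = ![↑p, ↑q] := by
    funext s; fin_cases s <;> rfl
  rw [MvPolynomial.coe_aeval, hcoe, ← psubst_coe _ hpq, subst2, ← psubst_sub]
  exact le_order_psubst (le_order_sub_degPart hΦ) hpq

theorem rename_swap_degPart (hΦ : m ≤ Φ.order)
    (hsymm : subst2 Φ (MvPowerSeries.X 1) (MvPowerSeries.X 0) = Φ) :
    MvPolynomial.rename (Equiv.swap (0 : Fin 2) 1) (degPart m Φ) = degPart m Φ := by
  have hrename : MvPolynomial.rename (Equiv.swap (0 : Fin 2) 1) (degPart m Φ)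
      = MvPolynomial.aeval ![MvPolynomial.X 1, MvPolynomial.X 0] (degPart m Φ) := by
    rw [MvPolynomial.rename_eq_aeval]
    congr 2
    funext s; fin_cases s <;> rfl
  have hP := isHomogeneous_degPart m Φ
  refine sub_eq_zero.1 ((hP.rename_isHomogeneous.sub hP).eq_zero_of_le_order ?_)
  have happrox := le_order_subst2_sub_aeval_degPart hΦ
    (p := (MvPolynomial.X 1 : MvPolynomial (Fin 2) A)) (q := MvPolynomial.X 0)
    (MvPolynomial.constantCoeff_X A 1) (MvPolynomial.constantCoeff_X A 0)
  simp only [MvPolynomial.coe_X, hsymm] at happrox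
  have hsplit : ((MvPolynomial.rename (Equiv.swap (0 : Fin 2) 1) (degPart m Φ) - degPart m Φ
      : MvPolynomial (Fin 2) A) : MvPowerSeries (Fin 2) A)
      = (Φ - ↑(degPart m Φ)) - (Φ - ↑(MvPolynomial.aeval
        ![(MvPolynomial.X 1 : MvPolynomial (Fin 2) A), MvPolynomial.X 0] (degPart m Φ))) := by
    rw [hrename, MvPolynomial.coe_sub]
    ring
  rw [hsplit]
  exact MvPowerSeries.le_order_sub_of_le (le_order_sub_degPart hΦ) happrox

theorem aeval_degPart_cocycle (hΦ : m ≤ Φ.order)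
    (hcocycle : ↑(m + 1) ≤ (subst2 Φ (MvPowerSeries.X 1) (MvPowerSeries.X 2)
      - subst2 Φ (MvPowerSeries.X 0 + MvPowerSeries.X 1) (MvPowerSeries.X 2)
      + subst2 Φ (MvPowerSeries.X 0) (MvPowerSeries.X 1 + MvPowerSeries.X 2)
      - subst2 Φ (MvPowerSeries.X 0) (MvPowerSeries.X 1) : MvPowerSeries (Fin 3) A).order) :
    MvPolynomial.aeval ![(MvPolynomial.X 1 : MvPolynomial (Fin 3) A), MvPolynomial.X 2]
        (degPart m Φ)
      - MvPolynomial.aeval ![MvPolynomial.X 0 + MvPolynomial.X 1, MvPolynomial.X 2] (degPart m Φ)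
      + MvPolynomial.aeval ![MvPolynomial.X 0, MvPolynomial.X 1 + MvPolynomial.X 2] (degPart m Φ)
      - MvPolynomial.aeval ![MvPolynomial.X 0, MvPolynomial.X 1] (degPart m Φ) = 0 := by
  have hX : ∀ i : Fin 3, (MvPolynomial.X i : MvPolynomial (Fin 3) A).IsHomogeneous 1 :=
    MvPolynomial.isHomogeneous_X A
  have hlin : ∀ p q : MvPolynomial (Fin 3) A, p.IsHomogeneous 1 → q.IsHomogeneous 1 →
      (MvPolynomial.aeval ![p, q] (degPart m Φ)).IsHomogeneous m := fun p q hp hq => by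
    simpa using (isHomogeneous_degPart m Φ).aeval ![p, q] (Fin.forall_fin_two.2 ⟨hp, hq⟩)
  refine ((((hlin _ _ (hX 1) (hX 2)).sub (hlin _ _ ((hX 0).add (hX 1)) (hX 2))).add
    (hlin _ _ (hX 0) ((hX 1).add (hX 2)))).sub (hlin _ _ (hX 0) (hX 1))).eq_zero_of_le_order ?_
  have h₁ := le_order_subst2_sub_aeval_degPart hΦ
    (p := (MvPolynomial.X 1 : MvPolynomial (Fin 3) A)) (q := MvPolynomial.X 2) (by simp) (by simp)
  have h₂ := le_order_subst2_sub_aeval_degPart hΦ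
    (p := (MvPolynomial.X 0 + MvPolynomial.X 1 : MvPolynomial (Fin 3) A)) (q := MvPolynomial.X 2)
    (by simp) (by simp)
  have h₃ := le_order_subst2_sub_aeval_degPart hΦ
    (p := (MvPolynomial.X 0 : MvPolynomial (Fin 3) A)) (q := MvPolynomial.X 1 + MvPolynomial.X 2)
    (by simp) (by simp)
  have h₄ := le_order_subst2_sub_aeval_degPart hΦ
    (p := (MvPolynomial.X 0 : MvPolynomial (Fin 3) A)) (q := MvPolynomial.X 1) (by simp) (by simp)
  simp only [MvPolynomial.coe_X, MvPolynomial.coe_add] at h₁ h₂ h₃ h₄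
  simp only [MvPolynomial.coe_sub, MvPolynomial.coe_add]
  convert MvPowerSeries.le_order_add_of_le (MvPowerSeries.le_order_sub_of_le
    (MvPowerSeries.le_order_add_of_le (MvPowerSeries.le_order_sub_of_le hcocycle h₁) h₂) h₃) h₄
    using 2
  ring

end degPart

theorem statement8 (A : Type*) [CommRing A] (F G : MvPowerSeries (Fin 2) A)
    (hF : IsFormalGroupLaw F) (hG : IsFormalGroupLaw G) (m : ℕ) (hm : 2 ≤ m)
    (hFG : ∀ d : Fin 2 →₀ ℕ, d 0 + d 1 < m →
      MvPowerSeries.coeff d F = MvPowerSeries.coeff d G) :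
    (degPart m (F - G)).IsHomogeneous m ∧ IsSymmCocycle (degPart m (F - G)) := by
  have hΔ : m ≤ (F - G).order := MvPowerSeries.nat_le_order fun d hd => by
    rw [map_sub, hFG d (Finsupp.degree_fin_two d ▸ hd), sub_self]
  have hsymm : subst2 (F - G) (MvPowerSeries.X 1) (MvPowerSeries.X 0) = F - G := by
    rw [subst2, psubst_sub]
    exact congrArg₂ (· - ·) hF.comm hG.comm
  exact ⟨isHomogeneous_degPart m (F - G), rename_swap_degPart hΔ hsymm,
    aeval_degPart_cocycle hΔ (hF.le_order_cocycle hG (by omega) hΔ)⟩
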